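/- In the group G̃ ≤ Aut(T_2) generated by a, b̃, c̃, d̃ (with a the rooted swap and φ(b̃)=(a,c̃), φ(c̃)=(1,d̃), φ(d̃)=(1,b̃)), the element x = a·b̃·c̃·d̃ has infinite order; in particular G̃ is not a torsion group. -/
import Mathlib


/-- The rooted automorphism `a` of the binary tree: it flips the first letter. -/
def gaFun : List Bool → List Bool
  | [] => []
  | s :: t => (!s) :: t

mutual
  /-- The generator `b̃` of `G̃`: `φ(b̃) = (a, c̃)`. -/
  def tbFun : List Bool → List Bool
    | [] => []
    | false :: t => false :: gaFun t
    | true :: t => true :: tcFun t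
  /-- The generator `c̃` of `G̃`: `φ(c̃) = (1, d̃)`. -/
  def tcFun : List Bool → List Bool
    | [] => []
    | false :: t => false :: t
    | true :: t => true :: tdFun t
  /-- The generator `d̃` of `G̃`: `φ(d̃) = (1, b̃)`. -/
  def tdFun : List Bool → List Bool
    | [] => []
    | false :: t => false :: t
    | true :: t => true :: tbFun t
end

theorem gaFun_involutive : Function.Involutive gaFun := by
  intro t
  cases t with
  | nil => rfl
  | cons s r => cases s <;> rfl

theorem tbcd_involutive :
    ∀ t : List Bool, tbFun (tbFun t) = t ∧ tcFun (tcFun t) = t ∧ tdFun (tdFun t) = t := by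
  intro t
  induction t with
  | nil => exact ⟨rfl, rfl, rfl⟩
  | cons s r ih =>
    cases s <;>
      simp [tbFun, tcFun, tdFun, gaFun_involutive r, ih.1, ih.2.1, ih.2.2]

/-- The generator `a` as a tree automorphism. -/
def ga : Equiv.Perm (List Bool) := Function.Involutive.toPerm gaFun gaFun_involutive

/-- The generator `b̃` as a tree automorphism. -/
def tb : Equiv.Perm (List Bool) := Function.Involutive.toPerm tbFun fun t => (tbcd_involutive t).1

/-- The generator `c̃` as a tree automorphism. -/
def tc : Equiv.Perm (List Bool) := Function.Involutive.toPerm tcFun fun t => (tbcd_involutive t).2.1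

/-- The generator `d̃` as a tree automorphism. -/
def td : Equiv.Perm (List Bool) := Function.Involutive.toPerm tdFun fun t => (tbcd_involutive t).2.2

/-- The group `G̃`, generated by `a, b̃, c̃, d̃`. -/
def gTilde : Subgroup (Equiv.Perm (List Bool)) := Subgroup.closure {ga, tb, tc, td}

-- Auxiliary lemmas

lemma cyclic_bcd : ∀ t : List Bool,
    tbFun (tcFun (tdFun t)) = tcFun (tdFun (tbFun t)) ∧
    tcFun (tdFun (tbFun t)) = tdFun (tbFun (tcFun t)) := by
  intro t
  induction t with
  | nil => exact ⟨rfl, rfl⟩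
  | cons s r ih =>
    cases s with
    | false => simp [tbFun, tcFun, tdFun]
    | true =>
      simp only [tbFun, tcFun, tdFun]
      exact ⟨by rw [ih.2], by rw [ih.1, ih.2]⟩

lemma ga_apply (t : List Bool) : ga t = gaFun t := rfl
lemma tb_apply (t : List Bool) : tb t = tbFun t := rfl
lemma tc_apply (t : List Bool) : tc t = tcFun t := rfl
lemma td_apply (t : List Bool) : td t = tdFun t := rfl

lemma x_apply (t : List Bool) :
    (ga * tb * tc * td) t = gaFun (tbFun (tcFun (tdFun t))) := rfl

lemma x_false (t : List Bool) :
    (ga * tb * tc * td) (false :: t) = true :: gaFun t := rfl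

lemma x_true (t : List Bool) :
    (ga * tb * tc * td) (true :: t) = false :: tcFun (tdFun (tbFun t)) := rfl

lemma xsq_true (t : List Bool) :
    (ga * tb * tc * td) ((ga * tb * tc * td) (true :: t)) =
      true :: (ga * tb * tc * td) t := by
  rw [x_true, x_false, x_apply, (cyclic_bcd t).1]

lemma xpow_two_mul (m : ℕ) (t : List Bool) :
    ((ga * tb * tc * td) ^ (2 * m)) (true :: t) =
      true :: ((ga * tb * tc * td) ^ m) t := by
  induction m generalizing t with
  | zero => simp
  | succ m ih =>
    have h1 : 2 * (m + 1) = 2 * m + 1 + 1 := by ring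
    rw [h1, pow_succ, pow_succ, Equiv.Perm.mul_apply, Equiv.Perm.mul_apply,
      xsq_true, ih, pow_succ, Equiv.Perm.mul_apply]
    rfl

lemma xpow_replicate (e q : ℕ) (t : List Bool) :
    ((ga * tb * tc * td) ^ (2 ^ e * q)) (List.replicate e true ++ t) =
      List.replicate e true ++ ((ga * tb * tc * td) ^ q) t := by
  induction e generalizing q with
  | zero => simp
  | succ e ih =>
    have h1 : 2 ^ (e + 1) * q = 2 * (2 ^ e * q) := by ring
    rw [h1, List.replicate_succ, List.cons_append, xpow_two_mul, ih]
    simp [List.replicate_succ]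

lemma xpow_odd_head (q : ℕ) (hq : q % 2 = 1) (t : List Bool) :
    ∃ r, ((ga * tb * tc * td) ^ q) (false :: t) = true :: r := by
  have key : ∀ n : ℕ,
      (n % 2 = 0 → ∃ r, ((ga * tb * tc * td) ^ n) (false :: t) = false :: r) ∧
      (n % 2 = 1 → ∃ r, ((ga * tb * tc * td) ^ n) (false :: t) = true :: r) := by
    intro n
    induction n with
    | zero => exact ⟨fun _ => ⟨t, by simp⟩, fun h => by omega⟩
    | succ n ih =>
      rcases Nat.mod_two_eq_zero_or_one n with hn | hn
      · obtain ⟨r, hr⟩ := ih.1 hn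
        refine ⟨fun h => by omega, fun _ => ⟨gaFun r, ?_⟩⟩
        rw [pow_succ', Equiv.Perm.mul_apply, hr, x_false]
      · obtain ⟨r, hr⟩ := ih.2 hn
        refine ⟨fun _ => ⟨tcFun (tdFun (tbFun r)), ?_⟩, fun h => by omega⟩
        rw [pow_succ', Equiv.Perm.mul_apply, hr, x_true]
  exact (key q).2 hq

lemma xpow_ne_one (m : ℕ) (hm : 0 < m) : (ga * tb * tc * td) ^ m ≠ 1 := by
  intro h
  set x := ga * tb * tc * td with hx
  have hm0 : m ≠ 0 := hm.ne'
  set e := m.factorization 2 with he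
  set q := m / 2 ^ e with hq
  have hmq : 2 ^ e * q = m := Nat.ordProj_mul_ordCompl_eq_self m 2
  have hodd : ¬ (2 ∣ q) := Nat.not_dvd_ordCompl Nat.prime_two hm0
  have hq1 : q % 2 = 1 := Nat.odd_iff.mp (Nat.odd_iff.mpr (by omega))
  obtain ⟨r, hr⟩ := xpow_odd_head q hq1 []
  have h3 := xpow_replicate e q ([false])
  rw [hmq, h] at h3
  simp only [Equiv.Perm.one_apply] at h3
  rw [hr] at h3
  have h4 := List.append_cancel_left h3
  simp at h4

/-- In the group `G̃ = ⟨a, b̃, c̃, d̃⟩`, the element `x = a·b̃·c̃·d̃` has infinite order;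
in particular `G̃` is not a torsion group. -/
theorem gTilde_element_of_infinite_order :
    ¬ IsOfFinOrder (ga * tb * tc * td) ∧
      ∃ g ∈ gTilde, ¬ IsOfFinOrder g := by
  have hnot : ¬ IsOfFinOrder (ga * tb * tc * td) := by
    intro h
    obtain ⟨n, hn, hpow⟩ := isOfFinOrder_iff_pow_eq_one.mp h
    exact xpow_ne_one n hn hpow
  refine ⟨hnot, ⟨ga * tb * tc * td, ?_, hnot⟩⟩
  have hga : ga ∈ gTilde := Subgroup.subset_closure (by simp)
  have htb : tb ∈ gTilde := Subgroup.subset_closure (by simp)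
  have htc : tc ∈ gTilde := Subgroup.subset_closure (by simp)
  have htd : td ∈ gTilde := Subgroup.subset_closure (by simp)
  exact mul_mem (mul_mem (mul_mem hga htb) htc) htd
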